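/- arXiv:2401.03535 — 2 statements merged into one kernel-verified Lean document; each statement's English description precedes it below -/
import Mathlib

section
/- The semigroup generated by the matrices A = [[1/2,0],[2,2]] and B = [[1/2,0],[0,2]] is free. -/
/-- A = [[1/2,0],[2,2]] -/
noncomputable def Amat : Matrix (Fin 2) (Fin 2) ℝ := !![1/2, 0; 2, 2]

/-- B = [[1/2,0],[0,2]] -/
noncomputable def Bmat : Matrix (Fin 2) (Fin 2) ℝ := !![1/2, 0; 0, 2]

/-- Product of the word `l` in the generators A (for `false`) and B (for `true`). -/
noncomputable def wordProdAB (l : List Bool) : Matrix (Fin 2) (Fin 2) ℝ :=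
  (l.map (fun b => if b then Bmat else Amat)).prod

/-- Base-4 encoding of a word. -/
def natN : List Bool → ℕ
  | [] => 0
  | b :: l => (if b then 0 else 1) + 4 * natN l

lemma natN_inj : ∀ l₁ l₂ : List Bool, l₁.length = l₂.length →
    natN l₁ = natN l₂ → l₁ = l₂
  | [], [], _, _ => rfl
  | b₁ :: t₁, b₂ :: t₂, hlen, hN => by
    simp only [List.length_cons, Nat.add_right_cancel_iff] at hlen
    simp only [natN] at hN
    have hb : b₁ = b₂ := by cases b₁ <;> cases b₂ <;> simp_all <;> omega
    subst hb
    have ht : natN t₁ = natN t₂ := by cases b₁ <;> simp_all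
    rw [natN_inj t₁ t₂ hlen ht]

lemma wordProd_eq (l : List Bool) :
    wordProdAB l = !![(1/2 : ℝ)^l.length, 0;
      (4 * natN l : ℝ) / 2^l.length, (2:ℝ)^l.length] := by
  induction l with
  | nil =>
    show (1 : Matrix (Fin 2) (Fin 2) ℝ) = _
    ext i j
    fin_cases i <;> fin_cases j <;> simp [natN, Matrix.one_apply]
  | cons b t ih =>
    have hstep : wordProdAB (b :: t) = (if b then Bmat else Amat) * wordProdAB t := by
      simp [wordProdAB]
    rw [hstep, ih]
    have h2 : (2:ℝ)^t.length ≠ 0 := by positivity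
    cases b <;>
      · ext i j
        fin_cases i <;> fin_cases j <;>
          · simp [Amat, Bmat, natN, Matrix.mul_apply, Fin.sum_univ_two, pow_succ]
            try field_simp
            try ring

/-- The semigroup generated by A and B is free: distinct nonempty words give
distinct matrices. -/
theorem free_semigroup_AB (l₁ l₂ : List Bool) (h₁ : l₁ ≠ []) (h₂ : l₂ ≠ [])
    (h : wordProdAB l₁ = wordProdAB l₂) : l₁ = l₂ := by
  rw [wordProd_eq, wordProd_eq] at h
  have h11 : (2:ℝ)^l₁.length = (2:ℝ)^l₂.length := by
    have := congrFun (congrFun h 1) 1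
    simpa using this
  have hlen : l₁.length = l₂.length :=
    pow_right_injective₀ (by norm_num) (by norm_num) h11
  have h10 : (4 * natN l₁ : ℝ) / 2^l₁.length = (4 * natN l₂ : ℝ) / 2^l₂.length := by
    have := congrFun (congrFun h 1) 0
    simpa using this
  rw [hlen] at h10
  have h2 : (2:ℝ)^l₂.length ≠ 0 := by positivity
  have hN : natN l₁ = natN l₂ := by
    field_simp at h10
    exact_mod_cast h10
  exact natN_inj l₁ l₂ hlen hN
end

section
/- Let f₁(x)=x/(4x+4), f₂(x)=x/4. For words v, w ∈ {1,2}^k with v < w in the lexicographic order (where 1 < 2 and comparison is from the left), the compositions satisfy f_v(x) < f_w(x) for all x > 0. -/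
/-- f₁(x) = x/(4x+4) -/
noncomputable def f1 (x : ℝ) : ℝ := x / (4*x + 4)

/-- f₂(x) = x/4 -/
noncomputable def f2 (x : ℝ) : ℝ := x / 4

/-- For a word `u` (with `false` standing for the symbol 1 and `true` for 2),
`compW u = f_{u₁} ∘ ⋯ ∘ f_{u_k}`. -/
noncomputable def compW (u : List Bool) : ℝ → ℝ :=
  u.foldr (fun b g => (if b then f2 else f1) ∘ g) id

/-!
In the coordinate `t = 1/x` both maps are affine, `f₁ : t ↦ 4t + 4` and `f₂ : t ↦ 4t`, so for a
word `u` of length `k` we get `1 / f_u(x) = 4^k / x + ∑_{uᵢ = 1} 4^i`. Thus `f_v(x) < f_w(x)` exactly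
when the base-4 number whose `i`-th digit is `[wᵢ = 2]` exceeds the one for `v`, and comparing such
numbers is comparing their digit strings lexicographically from the most significant (last) digit.
-/

namespace Nat

theorem ofDigits_reverse_lt_ofDigits_reverse {b : ℕ} (hb : 1 < b) {l₁ l₂ : List ℕ}
    (hl₁ : ∀ d ∈ l₁, d < b) (hlen : l₁.length = l₂.length) (hlt : l₁ < l₂) :
    ofDigits b l₁.reverse < ofDigits b l₂.reverse := by
  induction hlt with
  | nil => simp at hlen
  | @rel d p e q hde =>
    simp only [List.length_cons, add_left_inj] at hlen
    have hp : ofDigits b p.reverse < b ^ p.length := by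
      simpa using ofDigits_lt_base_pow_length hb (l := p.reverse)
        (fun d hd => hl₁ d (List.mem_cons_of_mem _ (List.mem_reverse.mp hd)))
    calc ofDigits b (d :: p).reverse = ofDigits b p.reverse + b ^ p.length * d :=
          ofDigits_reverse_cons p d
      _ < b ^ p.length * (d + 1) := by rw [mul_add_one]; omega
      _ ≤ b ^ q.length * e := by rw [← hlen]; gcongr; exact hde
      _ ≤ ofDigits b (e :: q).reverse := by rw [ofDigits_reverse_cons]; omega
  | @cons d p q _ ih =>
    simp only [List.length_cons, add_left_inj] at hlen
    rw [ofDigits_reverse_cons, ofDigits_reverse_cons, hlen]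
    exact Nat.add_lt_add_right (ih (fun e he => hl₁ e (List.mem_cons_of_mem _ he)) hlen) _

end Nat

theorem inv_f1 {x : ℝ} (hx : x ≠ 0) : (f1 x)⁻¹ = 4 * x⁻¹ + 4 := by
  rw [f1, inv_div]
  field_simp
  ring

theorem inv_f2 (x : ℝ) : (f2 x)⁻¹ = 4 * x⁻¹ := by
  rw [f2, inv_div, div_eq_mul_inv]

theorem compW_cons (b : Bool) (u : List Bool) (x : ℝ) :
    compW (b :: u) x = (if b then f2 else f1) (compW u x) := rfl

theorem compW_pos (u : List Bool) {x : ℝ} (hx : 0 < x) : 0 < compW u x := by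
  induction u with
  | nil => exact hx
  | cons b u ih =>
    cases b <;> simp only [compW_cons, f1, f2, Bool.false_eq_true, if_true, if_false] <;>
      positivity

theorem inv_compW (u : List Bool) {x : ℝ} (hx : 0 < x) :
    (compW u x)⁻¹ = 4 ^ u.length * x⁻¹ + (4 ^ (u.length + 1) - 4) / 3
      - 4 * (Nat.ofDigits 4 (u.map Bool.toNat) : ℕ) := by
  induction u with
  | nil => simp [compW]
  | cons b u ih =>
    have hu := (compW_pos u hx).ne'
    cases b
    · simp only [compW_cons, Bool.false_eq_true, if_false]
      rw [inv_f1 hu, ih]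
      push_cast [List.map_cons, Nat.ofDigits_cons, List.length_cons, Bool.toNat_false]
      ring
    · simp only [compW_cons, if_true]
      rw [inv_f2, ih]
      push_cast [List.map_cons, Nat.ofDigits_cons, List.length_cons, Bool.toNat_true]
      ring

/-- If v < w (words of length k in {1,2}) in the order of the paper, namely
1^k < 21^{k-1} < 121^{k-2} < ⋯ < 12^{k-1} < 2^k, i.e. the lexicographic order on
the reversed words induced by 1 < 2, then f_v(x) < f_w(x) for all x > 0. -/
theorem word_order_monotone (k : ℕ) (v w : List Bool)
    (hv : v.length = k) (hw : w.length = k)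
    (hlex : List.Lex (· < ·) v.reverse w.reverse)
    (x : ℝ) (hx : 0 < x) :
    compW v x < compW w x := by
  have hdigits : Nat.ofDigits 4 (v.map Bool.toNat) < Nat.ofDigits 4 (w.map Bool.toNat) := by
    simpa [List.map_reverse] using
      Nat.ofDigits_reverse_lt_ofDigits_reverse (by norm_num)
        (List.forall_mem_map.2 fun b _ => by cases b <;> decide) (by simp [hv, hw])
        (List.map_lt (f := Bool.toNat) (by decide) hlex)
  rw [← inv_lt_inv₀ (compW_pos w hx) (compW_pos v hx), inv_compW v hx, inv_compW w hx, hv, hw]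
  gcongr
end
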